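/- Let V be a 𝔤-module with action ρ, where 𝔤 = 𝔰𝔳(0). Then for every m ∈ ℤ, every polynomial u ∈ ℂ[x,y,z] and every w ∈ V: ρ(Y_m)( u(ρ(L₀),ρ(M₀),ρ(Y₀))·w ) = u(ρ(L₀)−m·id, ρ(M₀), ρ(Y₀))·( ρ(Y_m)·w ) − m·(∂u/∂z)(ρ(L₀)−m·id, ρ(M₀), ρ(Y₀))·( ρ(M_m)·w ). Here u(A,B,C) denotes the operator obtained by substituting the pairwise commuting operators A, B, C for x, y, z in u, and ∂u/∂z is the formal partial derivative. -/

import Mathlib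

/-- Evaluation of a polynomial `u(x,y,z)` at three operators `A, B, C`, applied to a
vector `w`: `u(A,B,C)·w` (when `A,B,C` pairwise commute, this is the usual substitution). -/
noncomputable def evalP {V : Type*} [AddCommGroup V] [Module ℂ V]
    (A B C : Module.End ℂ V) (w : V) (u : MvPolynomial (Fin 3) ℂ) : V :=
  (AddMonoidAlgebra.coeff u).sum fun d c => c • ((A ^ d 0 * B ^ d 1 * C ^ d 2) w)

/-!
Put `T = ρ(Y_m)`. The brackets give `T ρ(L₀) = (ρ(L₀) - m) T`, `T ρ(M₀) = ρ(M₀) T` and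
`T ρ(Y₀) = ρ(Y₀) T + D` with `D = -m ρ(M_m)` commuting with `ρ(Y₀)`. Moving `T` to the right
through a monomial `ρ(L₀)^a ρ(M₀)^b ρ(Y₀)^c` thus shifts `ρ(L₀)` by `-m` and, since `[T, ·]`
is a derivation, leaves the remainder `c ρ(L₀ - m)^a ρ(M₀)^b ρ(Y₀)^(c-1) D`, which is the
`∂/∂z` term.
-/

open MvPolynomial

section CommutatorPowers

variable {R : Type*} [Semiring R] {T C D : R}

theorem mul_pow_succ_of_mul_eq_add (h : T * C = C * T + D) (hCD : Commute C D) (n : ℕ) :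
    T * C ^ (n + 1) = C ^ (n + 1) * T + (n + 1) • (C ^ n * D) := by
  induction n with
  | zero => simpa using h
  | succ n ih =>
    calc T * C ^ (n + 1 + 1) = (T * C ^ (n + 1)) * C := by rw [pow_succ _ (n + 1), mul_assoc]
      _ = C ^ (n + 1) * (T * C) + (n + 1) • (C ^ n * (D * C)) := by
        rw [ih, add_mul, smul_mul_assoc, mul_assoc, mul_assoc]
      _ = C ^ (n + 1 + 1) * T + (n + 1 + 1) • (C ^ (n + 1) * D) := by
        rw [h, ← hCD.eq, mul_add, ← mul_assoc, ← pow_succ, ← mul_assoc, ← pow_succ, add_assoc,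
          succ_nsmul' _ (n + 1)]

theorem mul_pow_of_mul_eq_add (h : T * C = C * T + D) (hCD : Commute C D) (n : ℕ) :
    T * C ^ n = C ^ n * T + n • (C ^ (n - 1) * D) := by
  cases n with
  | zero => simp
  | succ n => simpa using mul_pow_succ_of_mul_eq_add h hCD n

theorem mul_monomial_of_mul_eq_add {A A' B : R} (hA : SemiconjBy T A A') (hB : Commute T B)
    (hC : T * C = C * T + D) (hCD : Commute C D) (a b c : ℕ) :
    T * (A ^ a * B ^ b * C ^ c)
      = A' ^ a * B ^ b * C ^ c * T + c • (A' ^ a * B ^ b * C ^ (c - 1) * D) := by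
  calc T * (A ^ a * B ^ b * C ^ c) = A' ^ a * B ^ b * (T * C ^ c) := by
        rw [← mul_assoc, ← mul_assoc, (hA.pow_right a).eq, mul_assoc _ T, (hB.pow_right b).eq]
        simp only [mul_assoc]
    _ = _ := by
        rw [mul_pow_of_mul_eq_add hC hCD, mul_add, mul_smul_comm, ← mul_assoc, ← mul_assoc]

end CommutatorPowers

section EvalP

variable {V : Type*} [AddCommGroup V] [Module ℂ V] (A B C : Module.End ℂ V)

theorem evalP_add (w : V) (p q : MvPolynomial (Fin 3) ℂ) :
    evalP A B C w (p + q) = evalP A B C w p + evalP A B C w q :=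
  Finsupp.sum_add_index' (fun _ => zero_smul ℂ _) fun _ _ _ => add_smul _ _ _

theorem evalP_monomial (w : V) (d : Fin 3 →₀ ℕ) (c : ℂ) :
    evalP A B C w (monomial d c) = c • (A ^ d 0 * B ^ d 1 * C ^ d 2) w :=
  sum_monomial_eq (zero_smul ℂ _)

theorem evalP_smul (c : ℂ) (w : V) (u : MvPolynomial (Fin 3) ℂ) :
    evalP A B C (c • w) u = c • evalP A B C w u := by
  simp only [evalP, Finsupp.smul_sum, map_smul, smul_comm c]

theorem apply_evalP_of_mul_eq_add {T D A' : Module.End ℂ V} (hA : SemiconjBy T A A')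
    (hB : Commute T B) (hC : T * C = C * T + D) (hCD : Commute C D) (w : V)
    (u : MvPolynomial (Fin 3) ℂ) :
    T (evalP A B C w u) = evalP A' B C (T w) u + evalP A' B C (D w) (pderiv 2 u) := by
  induction u using MvPolynomial.induction_on' with
  | add p q hp hq => rw [evalP_add, map_add, hp, hq, map_add, evalP_add, evalP_add]; abel
  | monomial d c =>
    have hd : (d - Finsupp.single 2 1 : Fin 3 →₀ ℕ) 0 = d 0 ∧
        (d - Finsupp.single 2 1 : Fin 3 →₀ ℕ) 1 = d 1 ∧
        (d - Finsupp.single 2 1 : Fin 3 →₀ ℕ) 2 = d 2 - 1 := by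
      simp
    rw [evalP_monomial, evalP_monomial, pderiv_monomial, evalP_monomial, hd.1, hd.2.1, hd.2.2,
      map_smul, ← Module.End.mul_apply, mul_monomial_of_mul_eq_add hA hB hC hCD]
    simp only [LinearMap.add_apply, LinearMap.smul_apply, Module.End.mul_apply, smul_add,
      mul_smul, Nat.cast_smul_eq_nsmul]

end EvalP

namespace LieModule

variable {R L M : Type*} [CommRing R] [LieRing L] [LieAlgebra R L] [AddCommGroup M] [Module R M]
  [LieRingModule L M] [LieModule R L M]

theorem toEnd_mul_toEnd (x y : L) :
    toEnd R L M x * toEnd R L M y = toEnd R L M y * toEnd R L M x + toEnd R L M ⁅x, y⁆ := by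
  ext v
  simp only [Module.End.mul_apply, LinearMap.add_apply, toEnd_apply_apply, lie_lie]
  abel

theorem commute_toEnd_of_lie_eq_zero {x y : L} (h : ⁅x, y⁆ = 0) :
    Commute (toEnd R L M x) (toEnd R L M y) := by
  simpa [Commute, SemiconjBy, h] using toEnd_mul_toEnd (R := R) (M := M) x y

end LieModule

theorem stmt11_general
    -- `𝔤 = 𝔰𝔳(0)`: a complex Lie algebra with basis `{L n, M n, Y n : n ∈ ℤ}` ...
    (g : Type*) [LieRing g] [LieAlgebra ℂ g] (L M Y : ℤ → g)
    -- ... and the following brackets: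
    (hLY : ∀ n m : ℤ, ⁅L n, Y m⁆ = ((m : ℂ) - (n : ℂ) / 2) • Y (m + n))
    (hYY : ∀ n m : ℤ, ⁅Y n, Y m⁆ = (((m : ℂ) - (n : ℂ))) • M (m + n))
    (hYM : ∀ n m : ℤ, ⁅Y n, M m⁆ = 0)
    -- a `𝔤`-module `V`:
    (V : Type*) [AddCommGroup V] [Module ℂ V] [LieRingModule g V] [LieModule ℂ g V]
    (m : ℤ) (u : MvPolynomial (Fin 3) ℂ) (w : V) :
    ⁅Y m, evalP (LieModule.toEnd ℂ g V (L 0)) (LieModule.toEnd ℂ g V (M 0))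
        (LieModule.toEnd ℂ g V (Y 0)) w u⁆ =
      evalP (LieModule.toEnd ℂ g V (L 0) - (m : ℂ) • 1) (LieModule.toEnd ℂ g V (M 0))
        (LieModule.toEnd ℂ g V (Y 0)) ⁅Y m, w⁆ u
      - (m : ℂ) • evalP (LieModule.toEnd ℂ g V (L 0) - (m : ℂ) • 1)
          (LieModule.toEnd ℂ g V (M 0)) (LieModule.toEnd ℂ g V (Y 0)) ⁅M m, w⁆
          (MvPolynomial.pderiv (2 : Fin 3) u) := by
  set ρ := LieModule.toEnd ℂ g V
  have hA : SemiconjBy (ρ (Y m)) (ρ (L 0)) (ρ (L 0) - (m : ℂ) • 1) := by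
    have h : ρ (L 0) * ρ (Y m) = ρ (Y m) * ρ (L 0) + (m : ℂ) • ρ (Y m) := by
      simpa [hLY] using LieModule.toEnd_mul_toEnd (R := ℂ) (M := V) (L 0) (Y m)
    rw [SemiconjBy, sub_mul, smul_mul_assoc, one_mul, h, add_sub_cancel_right]
  have hC : ρ (Y m) * ρ (Y 0) = ρ (Y 0) * ρ (Y m) + -(m : ℂ) • ρ (M m) := by
    simpa [hYY] using LieModule.toEnd_mul_toEnd (R := ℂ) (M := V) (Y m) (Y 0)
  have key := apply_evalP_of_mul_eq_add _ _ _ hA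
    (LieModule.commute_toEnd_of_lie_eq_zero (hYM m 0)) hC
    ((LieModule.commute_toEnd_of_lie_eq_zero (hYM 0 m)).smul_right _) w u
  rwa [LinearMap.smul_apply, evalP_smul, neg_smul, ← sub_eq_add_neg] at key

/-- For any `𝔰𝔳(0)`-module `V`, any `m ∈ ℤ`, `u ∈ ℂ[x,y,z]` and `w ∈ V`:
`ρ(Y_m)(u(ρL₀,ρM₀,ρY₀)·w) = u(ρL₀ − m·id, ρM₀, ρY₀)·(ρ(Y_m)·w)
  − m·(∂u/∂z)(ρL₀ − m·id, ρM₀, ρY₀)·(ρ(M_m)·w)`. -/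
theorem stmt11
    -- `𝔤 = 𝔰𝔳(0)`: a complex Lie algebra with basis `{L n, M n, Y n : n ∈ ℤ}` ...
    (g : Type*) [LieRing g] [LieAlgebra ℂ g] (L M Y : ℤ → g)
    (B : Module.Basis (Fin 3 × ℤ) ℂ g)
    (hB : ∀ n : ℤ, B (0, n) = L n ∧ B (1, n) = M n ∧ B (2, n) = Y n)
    -- ... and the following brackets:
    (hLL : ∀ n m : ℤ, ⁅L n, L m⁆ = (((m : ℂ) - (n : ℂ))) • L (m + n))
    (hLY : ∀ n m : ℤ, ⁅L n, Y m⁆ = ((m : ℂ) - (n : ℂ) / 2) • Y (m + n))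
    (hLM : ∀ n m : ℤ, ⁅L n, M m⁆ = (m : ℂ) • M (m + n))
    (hYY : ∀ n m : ℤ, ⁅Y n, Y m⁆ = (((m : ℂ) - (n : ℂ))) • M (m + n))
    (hYM : ∀ n m : ℤ, ⁅Y n, M m⁆ = 0)
    (hMM : ∀ n m : ℤ, ⁅M n, M m⁆ = 0)
    -- a `𝔤`-module `V`:
    (V : Type*) [AddCommGroup V] [Module ℂ V] [LieRingModule g V] [LieModule ℂ g V]
    (m : ℤ) (u : MvPolynomial (Fin 3) ℂ) (w : V) :
    ⁅Y m, evalP (LieModule.toEnd ℂ g V (L 0)) (LieModule.toEnd ℂ g V (M 0))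
        (LieModule.toEnd ℂ g V (Y 0)) w u⁆ =
      evalP (LieModule.toEnd ℂ g V (L 0) - (m : ℂ) • 1) (LieModule.toEnd ℂ g V (M 0))
        (LieModule.toEnd ℂ g V (Y 0)) ⁅Y m, w⁆ u
      - (m : ℂ) • evalP (LieModule.toEnd ℂ g V (L 0) - (m : ℂ) • 1)
          (LieModule.toEnd ℂ g V (M 0)) (LieModule.toEnd ℂ g V (Y 0)) ⁅M m, w⁆
          (MvPolynomial.pderiv (2 : Fin 3) u) :=
  stmt11_general g L M Y hLY hYY hYM V m u w
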